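/- (Low discrepancy of the golden-ratio Kronecker sequence.) Let φ := (1 + √5)/2 be the golden ratio and define the Kronecker sequence x_i := {i·φ} (the fractional part of i·φ) for i ≥ 1. Then there exists a constant C > 0 such that for all n ≥ 2, the L∞ star discrepancy of the first n terms satisfies d∞*((x_1, …, x_n)) ≤ C·log(n)/n. -/

import Mathlib

set_option maxHeartbeats 1000000
open scoped goldenRatio

/-- The L∞ star discrepancy of a list of `n` points of `[0,1)`:
`sup_{q ∈ (0,1]} |#{i : xᵢ < q}/n − q|`. -/
noncomputable def dinf (n : ℕ) (P : Fin n → ℝ) : ℝ :=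
  sSup ((fun q : ℝ => |((Finset.univ.filter fun i => P i < q).card : ℝ) / n - q|) ''
    Set.Ioc (0 : ℝ) 1)

/-- The golden ratio `φ = (1 + √5)/2`. -/
noncomputable def goldenPhi : ℝ := (1 + Real.sqrt 5) / 2
lemma goldenPhi_eq : goldenPhi = Real.goldenRatio := rfl

lemma count_transport {N : ℕ} (f : ℕ → ℕ)
    (hmaps : ∀ i < N, f i < N)
    (hinj : ∀ i < N, ∀ j < N, f i = f j → i = j)
    (p : ℕ → Prop) [DecidablePred p] :
    ((Finset.range N).filter fun i => p (f i)).card = ((Finset.range N).filter p).card := by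
  have hinj' : Set.InjOn f (Finset.range N) := by
    intro i hi j hj h
    exact hinj i (Finset.mem_range.1 hi) j (Finset.mem_range.1 hj) h
  have himg : (Finset.range N).image f = Finset.range N := by
    apply Finset.eq_of_subset_of_card_le
    · intro x hx
      obtain ⟨i, hi, rfl⟩ := Finset.mem_image.1 hx
      exact Finset.mem_range.2 (hmaps i (Finset.mem_range.1 hi))
    · rw [Finset.card_image_of_injOn hinj']
  calc ((Finset.range N).filter fun i => p (f i)).card
      = (((Finset.range N).filter fun i => p (f i)).image f).card :=
        (Finset.card_image_of_injOn (hinj'.mono (by exact_mod_cast Finset.filter_subset _ _))).symm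
    _ = (((Finset.range N).image f).filter p).card := by rw [Finset.filter_image]
    _ = ((Finset.range N).filter p).card := by rw [himg]

lemma count_lt_eq (N : ℕ) (x : ℝ) :
    ((Finset.range N).filter fun j : ℕ => (j : ℝ) < x).card = min N ⌈x⌉₊ := by
  have h : ((Finset.range N).filter fun j : ℕ => (j:ℝ) < x) = Finset.range (min N ⌈x⌉₊) := by
    ext j
    simp [Nat.lt_ceil, lt_min_iff]
  rw [h, Finset.card_range]

lemma block_bound (k : ℕ) (hk : 2 ≤ k) (β q : ℝ) (hq0 : 0 ≤ q) (hq1 : q ≤ 1) :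
    |(((Finset.range (Nat.fib k)).filter fun i : ℕ =>
        Int.fract (β + (i:ℝ) * goldenPhi) < q).card : ℝ) - (Nat.fib k : ℝ) * q| ≤ 4 := by
  classical
  set N := Nat.fib k with hNdef
  set c := Nat.fib (k + 1) with hcdef
  have hNpos : 0 < N := Nat.fib_pos.2 (by omega)
  have hNR : (0:ℝ) < N := by exact_mod_cast hNpos
  have hNne : (N:ℝ) ≠ 0 := ne_of_gt hNR
  set δ : ℝ := |ψ| ^ k with hδdef
  have hψ1 : |ψ| < 1 := abs_lt.2 ⟨Real.neg_one_lt_goldenConj, lt_trans Real.goldenConj_neg one_pos⟩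
  have hδ0 : 0 < δ := pow_pos (abs_pos.2 Real.goldenConj_ne_zero) k
  have hδ1 : δ ≤ 1 := le_of_lt (pow_lt_one₀ (abs_nonneg _) hψ1 (by omega))
  have hNδ : (N:ℝ) * δ ≤ 1 := by
    have h5 : (2:ℝ) ≤ Real.sqrt 5 := by
      nlinarith [Real.sq_sqrt (by norm_num : (0:ℝ) ≤ 5), Real.sqrt_nonneg 5]
    have hfib : (N:ℝ) = (φ ^ k - ψ ^ k) / Real.sqrt 5 := Real.coe_fib_eq k
    have hprod : φ ^ k * δ = 1 := by
      rw [hδdef, ← abs_of_pos (pow_pos Real.goldenRatio_pos k), ← abs_pow, ← abs_mul, ← mul_pow,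
        Real.goldenRatio_mul_goldenConj]
      simp
    have habs : -(δ) ≤ ψ ^ k := by
      rw [hδdef, ← abs_pow]; exact neg_abs_le _
    have h2 : (N:ℝ) * δ = (φ ^ k * δ - ψ ^ k * δ) / Real.sqrt 5 := by rw [hfib]; ring
    rw [h2, div_le_one (by linarith)]
    nlinarith [hδ0.le, hδ1]
  -- the key identity N·φ = c − ψ^k
  have hNφ : (N:ℝ) * goldenPhi = (c:ℝ) - ψ ^ k := by
    have h := Real.fib_succ_sub_goldenRatio_mul_fib k
    rw [goldenPhi_eq]; rw [hNdef, hcdef]; linarith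
  -- fractional data
  set b : ℝ := Int.fract β with hbdef
  have hb' : b = β - ⌊β⌋ := rfl
  set M : ℤ := ⌊b * N⌋ with hMdef
  set t : ℝ := Int.fract (b * N) with htdef
  have ht0 : 0 ≤ t := Int.fract_nonneg _
  have ht1 : t < 1 := Int.fract_lt_one _
  have hMt : (M:ℝ) + t = b * N := by rw [hMdef, htdef]; exact Int.floor_add_fract _
  -- the rotation map
  set g : ℕ → ℕ := fun i => ((M + (i:ℤ) * c) % N).toNat with hgdef
  have hgmod : ∀ i : ℕ, ((g i : ℕ) : ℤ) = (M + (i:ℤ) * c) % N := by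
    intro i
    exact Int.toNat_of_nonneg (Int.emod_nonneg _ (by exact_mod_cast hNpos.ne'))
  have hgmaps : ∀ i, i < N → g i < N := by
    intro i _
    have h := Int.emod_lt_of_pos (M + (i:ℤ)*c) (by exact_mod_cast hNpos : (0:ℤ) < N)
    have h2 := hgmod i
    omega
  have hginj : ∀ i < N, ∀ j < N, g i = g j → i = j := by
    intro i hi j hj h
    have h' : (M + (i:ℤ)*c) % N = (M + (j:ℤ)*c) % N := by
      rw [← hgmod i, ← hgmod j, h]
    have hmod : (i:ℤ) * c ≡ (j:ℤ) * c [ZMOD (N:ℤ)] := Int.ModEq.add_left_cancel' M h'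
    have hco : Int.gcd (N:ℤ) (c:ℤ) = 1 := by
      rw [Int.gcd_natCast_natCast]
      exact Nat.fib_coprime_fib_succ k
    have hmod2 := Int.ModEq.cancel_right_div_gcd (by exact_mod_cast hNpos : (0:ℤ) < N) hmod
    rw [hco] at hmod2
    simp only [Nat.cast_one, Int.ediv_one] at hmod2
    have hi' : (i:ℤ) % N = (i:ℤ) := Int.emod_eq_of_lt (by positivity) (by exact_mod_cast hi)
    have hj' : (j:ℤ) % N = (j:ℤ) := Int.emod_eq_of_lt (by positivity) (by exact_mod_cast hj)
    have : (i:ℤ) = j := by rw [← hi', ← hj']; exact hmod2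
    exact_mod_cast this
  -- grid points
  set z : ℕ → ℝ := fun j => ((j:ℝ) + t) / N with hzdef
  have hz0 : ∀ j, 0 ≤ z j := by
    intro j; rw [hzdef]; positivity
  have hz1 : ∀ j < N, z j < 1 := by
    intro j hj
    rw [hzdef]
    rw [div_lt_one hNR]
    have : (j:ℝ) + 1 ≤ N := by exact_mod_cast hj
    linarith
  -- key pointwise identity
  have key : ∀ i : ℕ, Int.fract (β + (i:ℝ) * goldenPhi)
      = Int.fract (z (g i) + (-((i:ℝ)/N) * ψ ^ k)) := by
    intro i
    rw [Int.fract_eq_fract]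
    refine ⟨⌊β⌋ + (M + (i:ℤ)*c) / N, ?_⟩
    have hg : ((g i : ℕ) : ℝ)
        = (M:ℝ) + (i:ℝ)*(c:ℝ) - (N:ℝ) * (((M + (i:ℤ)*(c:ℕ)) / (N:ℕ) : ℤ) : ℝ) := by
      have h2 := hgmod i
      have h1 : (M + (i:ℤ)*c) % N = M + (i:ℤ)*c - N * ((M + (i:ℤ)*c)/N) := Int.emod_def _ _
      rw [h1] at h2
      have h3 := congrArg (fun z : ℤ => (z:ℝ)) h2
      push_cast at h3
      linarith
    have hzg : z (g i) * N = ((g i : ℕ) : ℝ) + t := by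
      rw [hzdef]; field_simp
    have hepsN : ((i:ℝ)/N) * (N:ℝ) = (i:ℝ) := div_mul_cancel₀ _ hNne
    have hcast : ((⌊β⌋ + (M + (i:ℤ)*c) / N : ℤ) : ℝ)
        = (⌊β⌋:ℝ) + (((M + (i:ℤ)*(c:ℕ))/((N:ℕ):ℤ) : ℤ):ℝ) := by push_cast; ring
    rw [hcast]
    have hmain : (β + (i:ℝ) * goldenPhi - (z (g i) + -((i:ℝ)/N) * ψ ^ k)) * N
        = ((⌊β⌋:ℝ) + (((M + (i:ℤ)*(c:ℕ))/((N:ℕ):ℤ) : ℤ):ℝ)) * N := by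
      linear_combination (-1:ℝ)*hzg + (ψ^k)*hepsN + (-1:ℝ)*hg + (i:ℝ)*hNφ + (-1:ℝ)*hMt + (-(N:ℝ))*hb'
    exact mul_right_cancel₀ hNne hmain
  -- bound on the perturbation
  have heps : ∀ i < N, |(-((i:ℝ)/N) * ψ ^ k)| ≤ δ := by
    intro i hi
    have h2 : (0:ℝ) ≤ (i:ℝ)/N := by positivity
    have habs : |(-((i:ℝ)/N) * ψ ^ k)| = ((i:ℝ)/N) * |ψ| ^ k := by
      rw [abs_mul, abs_neg, abs_pow, abs_of_nonneg h2]
    rw [habs, hδdef]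
    have h1 : (i:ℝ)/N ≤ 1 := by
      rw [div_le_one hNR]; exact_mod_cast hi.le
    nlinarith [pow_nonneg (abs_nonneg ψ) k]
  -- grid counts
  have hgrid : ∀ x : ℝ, ((Finset.range N).filter fun j : ℕ => z j < x).card
      = min N ⌈(N:ℝ) * x - t⌉₊ := by
    intro x
    rw [← count_lt_eq N ((N:ℝ)*x - t)]
    refine congrArg Finset.card (Finset.filter_congr ?_)
    intro j hj
    simp only [hzdef]
    rw [div_lt_iff₀ hNR]
    constructor <;> intro h <;> nlinarith
  have hGub : ∀ x : ℝ, 0 ≤ x → ((min N ⌈(N:ℝ)*x - t⌉₊ : ℕ) : ℝ) ≤ (N:ℝ) * x + 1 := by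
    intro x hx
    have hmin : ((min N ⌈(N:ℝ)*x - t⌉₊ : ℕ) : ℝ) ≤ (⌈(N:ℝ)*x - t⌉₊ : ℝ) := by
      exact_mod_cast Nat.cast_le.2 (min_le_right N ⌈(N:ℝ)*x - t⌉₊)
    rcases le_or_gt ((N:ℝ)*x - t) 0 with h | h
    · have h0 : ⌈(N:ℝ)*x - t⌉₊ = 0 := Nat.ceil_eq_zero.2 h
      rw [h0]
      simp only [min_zero, Nat.cast_zero]
      nlinarith
    · have h2 : (⌈(N:ℝ)*x - t⌉₊ : ℝ) < ((N:ℝ)*x - t) + 1 := Nat.ceil_lt_add_one h.le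
      linarith
  have hGlb : ∀ x : ℝ, x ≤ 1 → (N:ℝ) * x - 1 ≤ ((min N ⌈(N:ℝ)*x - t⌉₊ : ℕ) : ℝ) := by
    intro x hx
    have hcast : ((min N ⌈(N:ℝ)*x - t⌉₊ : ℕ) : ℝ) = min (N:ℝ) ((⌈(N:ℝ)*x - t⌉₊ : ℕ) : ℝ) := by
      push_cast; rfl
    rw [hcast, le_min_iff]
    refine ⟨by nlinarith, ?_⟩
    have := Nat.le_ceil ((N:ℝ)*x - t)
    linarith
  set S := (Finset.range N).filter (fun i : ℕ => Int.fract (β + (i:ℝ) * goldenPhi) < q)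
    with hSdef
  have hub : (S.card : ℝ) ≤ (N:ℝ) * q + 4 := by
    have hsub : S ⊆ (Finset.range N).filter
        fun i : ℕ => (z (g i) < q + δ ∨ 1 - δ ≤ z (g i)) := by
      intro i hi
      rw [hSdef, Finset.mem_filter] at hi
      obtain ⟨hiN, hcond⟩ := hi
      rw [Finset.mem_filter]
      refine ⟨hiN, ?_⟩
      rw [key i] at hcond
      have hy0 := hz0 (g i)
      have hy1 := hz1 (g i) (hgmaps i (Finset.mem_range.1 hiN))
      have he := heps i (Finset.mem_range.1 hiN)
      rw [abs_le] at he
      rcases lt_or_ge (z (g i) + (-((i:ℝ)/N) * ψ ^ k)) 0 with h1 | h1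
      · left; linarith [he.1, he.2]
      rcases le_or_gt 1 (z (g i) + (-((i:ℝ)/N) * ψ ^ k)) with h2 | h2
      · right; linarith [he.1, he.2]
      · left
        rw [Int.fract_eq_self.2 ⟨h1, h2⟩] at hcond
        linarith [he.1, he.2]
    have hcard1 : S.card ≤ ((Finset.range N).filter fun i : ℕ => z (g i) < q + δ).card
        + ((Finset.range N).filter fun i : ℕ => 1 - δ ≤ z (g i)).card := by
      refine le_trans (Finset.card_le_card hsub) ?_
      rw [Finset.filter_or]
      exact Finset.card_union_le _ _
    have ht1' := count_transport g hgmaps hginj (fun r => z r < q + δ)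
    have ht2' := count_transport g hgmaps hginj (fun r => 1 - δ ≤ z r)
    have hnot : ((Finset.range N).filter fun j : ℕ => 1 - δ ≤ z j).card
        = N - ((Finset.range N).filter fun j : ℕ => z j < 1 - δ).card := by
      have h1 : ((Finset.range N).filter fun j : ℕ => 1 - δ ≤ z j)
          = (Finset.range N).filter fun j : ℕ => ¬ (z j < 1 - δ) := by
        refine Finset.filter_congr ?_
        intro j hj
        simp [not_lt]
      rw [h1, Finset.filter_not, Finset.card_sdiff_of_subset (Finset.filter_subset _ _),
        Finset.card_range]
    have hnat := hcard1
    rw [ht1', ht2', hnot, hgrid (q + δ), hgrid (1 - δ)] at hnat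
    have hminN : min N ⌈(N:ℝ)*(1-δ) - t⌉₊ ≤ N := min_le_left _ _
    have hcast := (Nat.cast_le (α := ℝ)).2 hnat
    rw [Nat.cast_add, Nat.cast_sub hminN] at hcast
    have e1 : ((min N ⌈(N:ℝ)*(q+δ) - t⌉₊ : ℕ) : ℝ) ≤ (N:ℝ)*(q+δ) + 1 := hGub _ (by linarith)
    have e2 : (N:ℝ)*(1-δ) - 1 ≤ ((min N ⌈(N:ℝ)*(1-δ) - t⌉₊ : ℕ) : ℝ) := hGlb _ (by linarith)
    nlinarith [hNδ]
  have hlb : (N:ℝ) * q - 4 ≤ (S.card : ℝ) := by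
    have hsub2 : ((Finset.range N).filter fun i : ℕ => δ ≤ z (g i) ∧ z (g i) < q - δ) ⊆ S := by
      intro i hi
      rw [Finset.mem_filter] at hi
      obtain ⟨hiN, hy1, hy2⟩ := hi
      rw [hSdef, Finset.mem_filter]
      refine ⟨hiN, ?_⟩
      rw [key i]
      have he := heps i (Finset.mem_range.1 hiN)
      rw [abs_le] at he
      have h0 : 0 ≤ z (g i) + (-((i:ℝ)/N) * ψ ^ k) := by linarith [he.1]
      have h1 : z (g i) + (-((i:ℝ)/N) * ψ ^ k) < q := by linarith [he.2]
      rw [Int.fract_eq_self.2 ⟨h0, by linarith⟩]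
      exact h1
    have htr := count_transport g hgmaps hginj (fun r => δ ≤ z r ∧ z r < q - δ)
    have hsplit : ((Finset.range N).filter fun j : ℕ => z j < q - δ)
        ⊆ ((Finset.range N).filter fun j : ℕ => δ ≤ z j ∧ z j < q - δ)
          ∪ ((Finset.range N).filter fun j : ℕ => z j < δ) := by
      intro j hj
      rw [Finset.mem_filter] at hj
      rw [Finset.mem_union, Finset.mem_filter, Finset.mem_filter]
      rcases le_or_gt δ (z j) with h | h
      · exact Or.inl ⟨hj.1, h, hj.2⟩
      · exact Or.inr ⟨hj.1, h⟩
    have hnat2 : min N ⌈(N:ℝ)*(q-δ) - t⌉₊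
        ≤ ((Finset.range N).filter fun j : ℕ => δ ≤ z j ∧ z j < q - δ).card
          + min N ⌈(N:ℝ)*δ - t⌉₊ := by
      rw [← hgrid (q - δ), ← hgrid δ]
      exact le_trans (Finset.card_le_card hsplit) (Finset.card_union_le _ _)
    have hcard2 : ((Finset.range N).filter fun j : ℕ => δ ≤ z j ∧ z j < q - δ).card
        ≤ S.card := by
      rw [← htr]
      exact Finset.card_le_card hsub2
    have e3 : (N:ℝ)*(q-δ) - 1 ≤ ((min N ⌈(N:ℝ)*(q-δ) - t⌉₊ : ℕ):ℝ) := hGlb _ (by linarith)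
    have e4 : ((min N ⌈(N:ℝ)*δ - t⌉₊ : ℕ):ℝ) ≤ (N:ℝ)*δ + 1 := hGub _ hδ0.le
    have hc2 := (Nat.cast_le (α := ℝ)).2 hcard2
    have hc3 := (Nat.cast_le (α := ℝ)).2 hnat2
    rw [Nat.cast_add] at hc3
    linarith [hNδ]
  rw [abs_le]
  exact ⟨by linarith, by linarith⟩
noncomputable def cnt (n : ℕ) (β q : ℝ) : ℕ :=
  ((Finset.range n).filter fun i : ℕ => Int.fract (β + (i:ℝ) * goldenPhi) < q).card

lemma cnt_split (F n : ℕ) (h : F ≤ n) (β q : ℝ) :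
    cnt n β q = cnt F β q + cnt (n - F) (β + (F:ℝ) * goldenPhi) q := by
  unfold cnt
  have hsplit : Finset.range n = Finset.range F ∪ Finset.Ico F n := by
    simp only [Finset.range_eq_Ico]
    exact (Finset.Ico_union_Ico_eq_Ico (Nat.zero_le F) h).symm
  rw [hsplit, Finset.filter_union, Finset.card_union_of_disjoint]
  · congr 1
    have hmap : Finset.Ico F n = (Finset.Ico 0 (n - F)).map (addLeftEmbedding F) := by
      rw [Finset.map_add_left_Ico]
      congr 1 <;> omega
    rw [hmap, Finset.filter_map, Finset.card_map, ← Finset.range_eq_Ico]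
    refine congrArg Finset.card (Finset.filter_congr ?_)
    intro j hj
    have heq : β + ((F + j : ℕ):ℝ) * goldenPhi
        = β + (F:ℝ)*goldenPhi + (j:ℝ)*goldenPhi := by push_cast; ring
    simp only [Function.comp, addLeftEmbedding_apply, heq]
  · refine Finset.disjoint_filter_filter ?_
    rw [Finset.range_eq_Ico]
    exact Finset.Ico_disjoint_Ico_consecutive 0 F n

lemma le_fib_add_two : ∀ n : ℕ, n + 1 ≤ Nat.fib (n + 2) := by
  intro n
  induction n with
  | zero => decide
  | succ m ih =>
    have h1 : 1 ≤ Nat.fib (m + 1) := Nat.fib_pos.2 (by omega)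
    have h2 : Nat.fib (m + 1 + 2) = Nat.fib (m + 1) + Nat.fib (m + 1 + 1) :=
      Nat.fib_add_two
    have h3 : Nat.fib (m + 1 + 1) = Nat.fib (m + 2) := by norm_num
    have h4 : Nat.fib (m + 3) = Nat.fib (m + 1 + 2) := by norm_num
    omega

lemma fib_succ_le (j : ℕ) : Nat.fib (j + 1) ≤ 2 * Nat.fib j + 3 := by
  cases j with
  | zero => decide
  | succ m =>
    have h1 : Nat.fib (m + 2) = Nat.fib m + Nat.fib (m + 1) := Nat.fib_add_two
    have h2 : Nat.fib m ≤ Nat.fib (m + 1) := Nat.fib_le_fib_succ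
    have h3 : Nat.fib (m + 1 + 1) = Nat.fib (m + 2) := by norm_num
    omega

lemma exists_fib_block (n : ℕ) (hn : 1 ≤ n) :
    ∃ k, 2 ≤ k ∧ Nat.fib k ≤ n ∧ n < Nat.fib (k + 1) := by
  have hP2 : Nat.fib 2 ≤ n := by simpa using hn
  set k := Nat.findGreatest (fun k => Nat.fib k ≤ n) (n + 2) with hkdef
  have hk2 : 2 ≤ k := Nat.le_findGreatest (by omega) hP2
  have hkle : k ≤ n + 2 := Nat.findGreatest_le _
  have hfk : Nat.fib k ≤ n :=
    Nat.findGreatest_spec (P := fun k => Nat.fib k ≤ n) (m := 2) (n := n + 2) (by omega) hP2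
  refine ⟨k, hk2, hfk, ?_⟩
  by_contra hcon
  push_neg at hcon
  rcases lt_or_eq_of_le hkle with hlt | heq
  · exact Nat.findGreatest_is_greatest (Nat.lt_succ_self k) (by omega) hcon
  · have := le_fib_add_two n
    rw [← heq] at this
    omega

lemma cnt_bound (n : ℕ) : ∀ β q : ℝ, 0 ≤ q → q ≤ 1 →
    |(cnt n β q : ℝ) - (n:ℝ) * q| ≤ 4 * (Real.log n / Real.log (3/2) + 1) := by
  induction n using Nat.strong_induction_on with
  | _ n ih =>
  intro β q hq0 hq1
  have hL : 0 < Real.log (3/2) := Real.log_pos (by norm_num)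
  rcases Nat.eq_zero_or_pos n with rfl | hn
  · simp [cnt]
  obtain ⟨k, hk2, hfk, hlt⟩ := exists_fib_block n hn
  set F := Nat.fib k with hFdef
  set m := n - F with hmdef
  have hF1 : 1 ≤ F := Nat.fib_pos.2 (by omega)
  have hmn : m < n := by omega
  have hsplit := cnt_split F n hfk β q
  have hblock : |(cnt F β q : ℝ) - (F:ℝ)*q| ≤ 4 := block_bound k hk2 β q hq0 hq1
  have hlogn : 0 ≤ Real.log n := Real.log_nonneg (by exact_mod_cast hn)
  have h3m : 3 * m ≤ 2 * n := by
    obtain ⟨a, rfl⟩ : ∃ a, k = a + 2 := ⟨k - 2, by omega⟩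
    have h1 : Nat.fib (a + 2 + 1) = Nat.fib (a + 1) + Nat.fib (a + 2) := by
      have h := Nat.fib_add_two (n := a + 1)
      have e1 : a + 1 + 2 = a + 2 + 1 := by omega
      have e2 : a + 1 + 1 = a + 2 := by omega
      rw [e1, e2] at h
      exact h
    have h2 : Nat.fib (a + 1) ≤ 2 * Nat.fib a + 3 := fib_succ_le a
    have h0 : Nat.fib (a + 2) = Nat.fib a + Nat.fib (a + 1) := Nat.fib_add_two
    omega
  have hcast : (cnt n β q : ℝ) - n*q
      = ((cnt F β q : ℝ) - (F:ℝ)*q) + ((cnt m (β + (F:ℝ)*goldenPhi) q : ℝ) - (m:ℝ)*q) := by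
    rw [hsplit]
    have hmF : (m:ℝ) = (n:ℝ) - (F:ℝ) := by
      rw [hmdef]
      push_cast [Nat.cast_sub hfk]
      ring
    push_cast
    rw [hmF]
    ring
  rw [hcast]
  rcases Nat.eq_zero_or_pos m with hm0 | hm1
  · have hz : (cnt m (β + (F:ℝ)*goldenPhi) q : ℝ) - (m:ℝ)*q = 0 := by
      rw [hm0]; simp [cnt]
    rw [hz, add_zero]
    have : (4:ℝ) ≤ 4 * (Real.log n / Real.log (3/2) + 1) := by
      have : 0 ≤ Real.log n / Real.log (3/2) := by positivity
      linarith
    linarith [hblock]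
  · have hihm := ih m hmn (β + (F:ℝ)*goldenPhi) q hq0 hq1
    have hm1R : (1:ℝ) ≤ (m:ℝ) := by exact_mod_cast hm1
    have hlog : Real.log m + Real.log (3/2) ≤ Real.log n := by
      rw [← Real.log_mul (by linarith) (by norm_num)]
      apply Real.log_le_log (by nlinarith)
      have h3mR : (3:ℝ) * m ≤ 2 * n := by exact_mod_cast h3m
      nlinarith
    have hdiv : Real.log m / Real.log (3/2) + 1 ≤ Real.log n / Real.log (3/2) := by
      have h' := (div_le_div_iff_of_pos_right hL).2 hlog
      rw [add_div, div_self (ne_of_gt hL)] at h'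
      exact h'
    calc |((cnt F β q : ℝ) - (F:ℝ)*q) + ((cnt m (β + (F:ℝ)*goldenPhi) q : ℝ) - (m:ℝ)*q)|
        ≤ |((cnt F β q : ℝ) - (F:ℝ)*q)| + |((cnt m (β + (F:ℝ)*goldenPhi) q : ℝ) - (m:ℝ)*q)| :=
          abs_add_le _ _
      _ ≤ 4 + 4 * (Real.log m / Real.log (3/2) + 1) := by linarith
      _ ≤ 4 * (Real.log n / Real.log (3/2) + 1) := by linarith

/-- Low discrepancy of the golden-ratio Kronecker sequence `xᵢ = {i·φ}`: its first `n`
terms have L∞ star discrepancy at most `C·log(n)/n` for some constant `C > 0`. -/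
theorem kronecker_golden_low_discrepancy :
    ∃ C > 0, ∀ n : ℕ, 2 ≤ n →
      dinf n (fun i : Fin n => Int.fract ((((i : ℕ) : ℝ) + 1) * goldenPhi)) ≤
        C * Real.log n / n := by
  have hL : 0 < Real.log (3/2) := Real.log_pos (by norm_num)
  have hL2 : 0 < Real.log 2 := Real.log_pos (by norm_num)
  refine ⟨4 / Real.log (3/2) + 4 / Real.log 2, by positivity, ?_⟩
  intro n hn
  have hn0 : (0:ℝ) < n := by
    have : (2:ℝ) ≤ n := by exact_mod_cast hn
    linarith
  have hlogn : Real.log 2 ≤ Real.log n :=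
    Real.log_le_log (by norm_num) (by exact_mod_cast hn)
  have hlogn0 : 0 < Real.log n := lt_of_lt_of_le hL2 hlogn
  have hCpos : 0 ≤ (4 / Real.log (3/2) + 4 / Real.log 2) * Real.log n / n := by
    apply div_nonneg _ hn0.le
    apply mul_nonneg (by positivity) hlogn0.le
  apply Real.sSup_le _ hCpos
  rintro x ⟨q, hq, rfl⟩
  obtain ⟨hq0, hq1⟩ := hq
  have hcardeq : (Finset.univ.filter fun i : Fin n =>
      Int.fract ((((i:ℕ):ℝ) + 1) * goldenPhi) < q).card = cnt n goldenPhi q := by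
    unfold cnt
    rw [Finset.card_filter, Finset.card_filter]
    rw [Fin.sum_univ_eq_sum_range
      (fun j : ℕ => if Int.fract (((j:ℝ) + 1) * goldenPhi) < q then 1 else 0)]
    apply Finset.sum_congr rfl
    intro i _
    have heq : ((i:ℝ) + 1) * goldenPhi = goldenPhi + (i:ℝ) * goldenPhi := by ring
    rw [heq]
  have hmain := cnt_bound n goldenPhi q hq0.le hq1
  have h1 : |((cnt n goldenPhi q : ℝ))/n - q| = |(cnt n goldenPhi q : ℝ) - (n:ℝ)*q| / n := by
    have heq2 : ((cnt n goldenPhi q : ℝ))/n - q = ((cnt n goldenPhi q : ℝ) - (n:ℝ)*q)/n := by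
      field_simp
    rw [heq2, abs_div, abs_of_pos hn0]
  show |((Finset.univ.filter fun i : Fin n =>
      Int.fract ((((i:ℕ):ℝ) + 1) * goldenPhi) < q).card : ℝ) / n - q|
      ≤ (4 / Real.log (3/2) + 4 / Real.log 2) * Real.log n / n
  rw [hcardeq, h1]
  have h2 : |(cnt n goldenPhi q : ℝ) - (n:ℝ)*q|
      ≤ (4 / Real.log (3/2) + 4 / Real.log 2) * Real.log n := by
    refine le_trans hmain ?_
    have hexp1 : 4 * (Real.log n / Real.log (3/2) + 1)
        = (4/Real.log (3/2)) * Real.log n + 4 := by ring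
    have hexp2 : (4 / Real.log (3/2) + 4 / Real.log 2) * Real.log n
        = (4/Real.log (3/2)) * Real.log n + (4/Real.log 2) * Real.log n := by ring
    have h4 : 4 ≤ (4/Real.log 2) * Real.log n := by
      rw [div_mul_eq_mul_div, le_div_iff₀ hL2]
      nlinarith
    linarith
  calc |(cnt n goldenPhi q : ℝ) - (n:ℝ)*q| / n
      ≤ ((4 / Real.log (3/2) + 4 / Real.log 2) * Real.log n) / n :=
        (div_le_div_iff_of_pos_right hn0).2 h2
    _ = (4 / Real.log (3/2) + 4 / Real.log 2) * Real.log n / n := rfl
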